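/- Let Ω be a compact metric space, T : Ω → Ω a homeomorphism, and A : Ω → SL(2l, ℂ) continuous. If the cocycle (T, A) does not satisfy the uniform exponential growth condition, then there exist ω ∈ Ω and a unit vector v ∈ ℂ^{2l} such that ‖Aₙ(ω)v‖ ≤ 1 for all n ∈ ℤ. -/

import Mathlib

/-!
If the conclusion fails, every unit vector at every point is pushed above norm `1` at some time;
compactness of `Ω × S` makes the time window `[-R, R]` and the excess `ε` uniform, while
compactness and continuity bound all `Aᵣ`, `|r| ≤ R`, by some `C`. Along an orbit, the log-norm
`g n = log ‖Aₙ(ω) v‖` then climbs by `δ = log (1 + ε)` within `R` steps and changes by at most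
`log C` over any `R` steps. The greedy walk `sₖ` that always climbs has `g (sₖ) ≥ k δ`, so
`|sₖ| → ∞`; moving by at most `R` at a time it passes within `R` of every integer on one side of
`0`, which gives `g n ≥ δ n / (R + 1) - δ - log C` on that side, with constants independent of
`(ω, v)`.
-/

noncomputable section
open Matrix

variable {Ω : Type*} {ι : Type*} [Fintype ι] [DecidableEq ι]

/-- Forward transfer matrices: `fwd T A n ω = A(Tⁿ⁻¹ω) ⋯ A(ω)`. -/
def fwd (T : Equiv.Perm Ω) (A : Ω → Matrix ι ι ℂ) : ℕ → Ω → Matrix ι ι ℂ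
  | 0, _ => 1
  | n + 1, ω => A ((⇑T)^[n] ω) * fwd T A n ω

/-- Backward transfer matrices: `bwd T A n ω = A(T⁻ⁿω)⁻¹ ⋯ A(T⁻¹ω)⁻¹`. -/
def bwd (T : Equiv.Perm Ω) (A : Ω → Matrix ι ι ℂ) : ℕ → Ω → Matrix ι ι ℂ
  | 0, _ => 1
  | n + 1, ω => (A ((⇑T.symm)^[n + 1] ω))⁻¹ * bwd T A n ω

/-- The transfer matrices `Aₙ(ω)`, `n : ℤ`, of the cocycle `(T, A)`. -/
def transfer (T : Equiv.Perm Ω) (A : Ω → Matrix ι ι ℂ) (n : ℤ) (ω : Ω) : Matrix ι ι ℂ :=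
  if 0 ≤ n then fwd T A n.toNat ω else bwd T A (-n).toNat ω

namespace Equiv.Perm

variable {α : Type*}

theorem zpow_natCast_apply (f : Perm α) (n : ℕ) (x : α) : (f ^ (n : ℤ)) x = (⇑f)^[n] x := by
  rw [zpow_natCast, iterate_eq_pow]

theorem zpow_negSucc_apply (f : Perm α) (n : ℕ) (x : α) :
    (f ^ Int.negSucc n) x = (⇑f.symm)^[n + 1] x := by
  rw [zpow_negSucc, ← inv_pow, iterate_eq_pow, inv_def]

end Equiv.Perm

section Cocycle

variable (T : Equiv.Perm Ω) (A : Ω → Matrix ι ι ℂ)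

theorem transfer_natCast (n : ℕ) (ω : Ω) : transfer T A n ω = fwd T A n ω := by
  simp [transfer]

theorem transfer_neg_natCast (n : ℕ) (ω : Ω) : transfer T A (-n) ω = bwd T A n ω := by
  rcases n with _ | n
  · simp [transfer, fwd, bwd]
  · rw [transfer, if_neg (by omega), neg_neg, Int.toNat_natCast]

@[simp]
theorem transfer_zero (ω : Ω) : transfer T A 0 ω = 1 := transfer_natCast T A 0 ω

variable {A} (hA : ∀ ω, IsUnit (A ω).det)
include hA

theorem transfer_add_one (n : ℤ) (ω : Ω) :
    transfer T A (n + 1) ω = A ((T ^ n) ω) * transfer T A n ω := by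
  rcases n with n | n
  · simp only [Int.ofNat_eq_natCast, ← Nat.cast_add_one, transfer_natCast,
      T.zpow_natCast_apply]
    rfl
  · rw [show Int.negSucc n + 1 = -(n : ℤ) by omega, transfer_neg_natCast, T.zpow_negSucc_apply,
      show Int.negSucc n = -((n + 1 : ℕ) : ℤ) by omega, transfer_neg_natCast, bwd,
      ← Matrix.mul_assoc, Matrix.mul_nonsing_inv _ (hA _), Matrix.one_mul]

theorem transfer_sub_one (n : ℤ) (ω : Ω) :
    transfer T A (n - 1) ω = (A ((T ^ (n - 1)) ω))⁻¹ * transfer T A n ω := by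
  rw [← sub_add_cancel n 1, transfer_add_one T hA, add_sub_cancel_right, ← Matrix.mul_assoc,
    Matrix.nonsing_inv_mul _ (hA _), Matrix.one_mul]

theorem transfer_add (m n : ℤ) (ω : Ω) :
    transfer T A (m + n) ω = transfer T A m ((T ^ n) ω) * transfer T A n ω := by
  induction m using Int.induction_on with
  | zero => simp
  | succ m ih =>
    rw [add_right_comm, transfer_add_one T hA, ih, transfer_add_one T hA, ← Matrix.mul_assoc,
      ← Equiv.Perm.mul_apply, ← _root_.zpow_add]
  | pred m ih =>
    rw [sub_add_eq_add_sub, transfer_sub_one T hA, ih, transfer_sub_one T hA,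
      ← Matrix.mul_assoc, ← Equiv.Perm.mul_apply, ← _root_.zpow_add, sub_add_eq_add_sub]

theorem isUnit_det_transfer (n : ℤ) (ω : Ω) : IsUnit (transfer T A n ω).det := by
  induction n using Int.induction_on with
  | zero => simp
  | succ n ih => rw [transfer_add_one T hA, Matrix.det_mul]; exact (hA _).mul ih
  | pred n ih =>
    rw [transfer_sub_one T hA, Matrix.det_mul, Matrix.det_nonsing_inv]
    exact (hA _).ringInverse.mul ih

end Cocycle

theorem Continuous.matrix_inv {X R : Type*} [TopologicalSpace X] [NormedCommRing R]
    [HasSummableGeomSeries R] {M : X → Matrix ι ι R} (hM : Continuous M)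
    (hdet : ∀ x, IsUnit (M x).det) : Continuous fun x => (M x)⁻¹ :=
  continuous_iff_continuousAt.mpr fun x =>
    (continuousAt_matrix_inv _ ((hdet x).unit_spec ▸
      NormedRing.inverse_continuousAt (hdet x).unit)).comp hM.continuousAt

theorem Matrix.mulVec_ne_zero_of_isUnit_det {R : Type*} [CommRing R] {M : Matrix ι ι R}
    (hM : IsUnit M.det) {v : ι → R} (hv : v ≠ 0) : M *ᵥ v ≠ 0 := by
  simpa using (Matrix.mulVec_injective_of_isUnit ((M.isUnit_iff_isUnit_det).mpr hM)).ne hv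

section Continuity

variable [TopologicalSpace Ω] (T : Ω ≃ₜ Ω) {A : Ω → Matrix ι ι ℂ} (hA : Continuous A)
include hA

theorem continuous_fwd (n : ℕ) : Continuous (fwd T.toEquiv A n) := by
  induction n with
  | zero => exact continuous_const
  | succ n ih => exact (hA.comp (T.continuous.iterate n)).matrix_mul ih

theorem continuous_bwd (hdet : ∀ ω, IsUnit (A ω).det) (n : ℕ) :
    Continuous (bwd T.toEquiv A n) := by
  induction n with
  | zero => exact continuous_const
  | succ n ih =>
    exact ((hA.comp (T.symm.continuous.iterate (n + 1))).matrix_inv fun _ => hdet _).matrix_mul ih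

theorem continuous_transfer (hdet : ∀ ω, IsUnit (A ω).det) (n : ℤ) :
    Continuous (transfer T.toEquiv A n) := by
  obtain ⟨n, rfl | rfl⟩ := Int.eq_nat_or_neg n
  · rw [funext (transfer_natCast T.toEquiv A n)]
    exact continuous_fwd T hA n
  · rw [funext (transfer_neg_natCast T.toEquiv A n)]
    exact continuous_bwd T hA hdet n

end Continuity

section Walk

variable {s : ℕ → ℤ} {R : ℕ}

theorem abs_le_mul_of_abs_sub_le (hs0 : s 0 = 0) (hs : ∀ k, |s (k + 1) - s k| ≤ R) (k : ℕ) :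
    |s k| ≤ k * R := by
  induction k with
  | zero => simp [hs0]
  | succ k ih =>
    have := abs_le.mp (hs k)
    rw [abs_le] at ih ⊢
    push_cast
    constructor <;> linarith

theorem exists_abs_sub_le_of_le_of_le (hs : ∀ k, |s (k + 1) - s k| ≤ R) {n : ℤ} {k : ℕ}
    (h0 : s 0 ≤ n) (hk : n ≤ s k) : ∃ j, |s j - n| ≤ R := by
  induction k with
  | zero => exact ⟨0, by simp [le_antisymm hk h0]⟩
  | succ k ih =>
    by_cases hn : n ≤ s k
    · exact ih hn
    · have := abs_le.mp (hs k)
      exact ⟨k + 1, abs_le.mpr ⟨by omega, by omega⟩⟩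

end Walk

section Climb

variable {g : ℤ → ℝ} {R : ℕ} {c δ : ℝ}

theorem linear_lower_bound_of_walk (hδ : 0 ≤ δ)
    (hstep : ∀ n m : ℤ, |m| ≤ R → g (n + m) ≤ g n + c)
    {s : ℕ → ℤ} (hs0 : s 0 = 0) (hs : ∀ k, |s (k + 1) - s k| ≤ R) (hgs : ∀ k : ℕ, k * δ ≤ g (s k))
    {n : ℕ} (hn : ∃ k, (n : ℤ) ≤ s k) : δ / (R + 1) * n - (δ + c) ≤ g n := by
  obtain ⟨k, hk⟩ := hn
  obtain ⟨j, hj⟩ := exists_abs_sub_le_of_le_of_le hs (by rw [hs0]; positivity) hk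
  have hnj : (n : ℝ) ≤ (j + 1) * R := by
    have := abs_le.mp hj
    have := abs_le.mp (abs_le_mul_of_abs_sub_le hs0 hs j)
    exact_mod_cast (show (n : ℤ) ≤ (j + 1) * R by linarith)
  have hgj : g (s j) ≤ g n + c := by simpa using hstep n (s j - n) hj
  have : δ / (R + 1) * n ≤ (j + 1) * δ := by
    rw [div_mul_eq_mul_div, div_le_iff₀ (by positivity)]
    nlinarith
  linarith [hgs j]

theorem linear_growth_of_climb (hδ : 0 < δ) (hg0 : g 0 = 0)
    (hstep : ∀ n m : ℤ, |m| ≤ R → g (n + m) ≤ g n + c)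
    (hclimb : ∀ n, ∃ m : ℤ, |m| ≤ R ∧ g n + δ ≤ g (n + m)) :
    (∀ n : ℕ, δ / (R + 1) * n - (δ + c) ≤ g n) ∨ (∀ n : ℕ, δ / (R + 1) * n - (δ + c) ≤ g (-n)) := by
  choose r hrR hr using hclimb
  let s (k : ℕ) : ℤ := (fun m => m + r m)^[k] 0
  have hs_succ (k : ℕ) : s (k + 1) = s k + r (s k) := Function.iterate_succ_apply' _ _ _
  have hs (k : ℕ) : |s (k + 1) - s k| ≤ R := by simpa [hs_succ] using hrR (s k)
  have hgs (k : ℕ) : k * δ ≤ g (s k) := by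
    induction k with
    | zero => simp [s, hg0]
    | succ k ih => rw [hs_succ]; push_cast; linarith [hr (s k)]
  have hunb (N : ℤ) : ∃ k, N < |s k| := by
    by_contra! h
    obtain ⟨B, hB⟩ := ((Set.finite_Icc (-N) N).image g).bddAbove
    obtain ⟨k, hk⟩ := exists_nat_gt (B / δ)
    have := hB ⟨s k, abs_le.mp (h k), rfl⟩
    rw [div_lt_iff₀ hδ] at hk
    linarith [hgs k]
  by_cases hup : ∀ N : ℤ, ∃ k, N ≤ s k
  · exact .inl fun n => linear_lower_bound_of_walk hδ.le hstep (s := s) rfl hs hgs (hup n)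
  · push Not at hup
    obtain ⟨M, hM⟩ := hup
    refine .inr fun n => linear_lower_bound_of_walk (g := fun m => g (-m)) (s := fun k => -s k)
      hδ.le (fun n m hm => by simpa only [neg_add] using hstep (-n) (-m) (by rwa [abs_neg]))
      (by simp [s]) (fun k => by rw [neg_sub_neg, abs_sub_comm]; exact hs k) (by simpa using hgs) ?_
    obtain ⟨k, hk⟩ := hunb (max n M)
    have := hM k
    refine ⟨k, ?_⟩
    rcases lt_abs.mp hk with h | h <;> omega

end Climb

def UniformExpGrowth (T : Equiv.Perm Ω) (A : Ω → Matrix ι ι ℂ) : Prop :=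
  ∃ β : ℝ, 0 < β ∧ ∃ lam : ℝ, 1 < lam ∧ ∀ (ω : Ω) (v : ι → ℂ), v ≠ 0 →
    (∀ n : ℕ, β * lam ^ n * ‖v‖ ≤ ‖(transfer T A (n : ℤ) ω).mulVec v‖) ∨
    (∀ n : ℕ, β * lam ^ n * ‖v‖ ≤ ‖(transfer T A (-(n : ℤ)) ω).mulVec v‖)

theorem uniformExpGrowth_of_bounded_of_expanding {T : Equiv.Perm Ω} {A : Ω → Matrix ι ι ℂ}
    (hdet : ∀ ω, IsUnit (A ω).det) {R : ℕ} {C ε : ℝ} (hC : 0 < C) (hε : 0 < ε)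
    (hbound : ∀ ω (r : ℤ) w, |r| ≤ (R : ℤ) → ‖transfer T A r ω *ᵥ w‖ ≤ C * ‖w‖)
    (hexpand : ∀ ω w, ∃ r : ℤ, |r| ≤ (R : ℤ) ∧ (1 + ε) * ‖w‖ ≤ ‖transfer T A r ω *ᵥ w‖) :
    UniformExpGrowth T A := by
  set δ := Real.log (1 + ε)
  set c := Real.log C
  refine ⟨Real.exp (-(δ + c)), Real.exp_pos _, Real.exp (δ / (R + 1)), ?_, fun ω v hv => ?_⟩
  · exact Real.one_lt_exp_iff.mpr (by have := Real.log_pos (by linarith : 1 < 1 + ε); positivity)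
  have hpos (n : ℤ) : 0 < ‖transfer T A n ω *ᵥ v‖ :=
    norm_pos_iff.mpr (Matrix.mulVec_ne_zero_of_isUnit_det (isUnit_det_transfer T hdet n ω) hv)
  have hcocycle (n m : ℤ) :
      transfer T A (n + m) ω *ᵥ v = transfer T A m ((T ^ n) ω) *ᵥ (transfer T A n ω *ᵥ v) := by
    rw [add_comm, transfer_add T hdet, Matrix.mulVec_mulVec]
  let g (n : ℤ) : ℝ := Real.log ‖transfer T A n ω *ᵥ v‖ - Real.log ‖v‖
  have hstep (n m : ℤ) (hm : |m| ≤ R) : g (n + m) ≤ g n + c := by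
    have := (Real.log_le_log (hpos _) ((hcocycle n m).symm ▸ hbound _ m _ hm))
    rw [Real.log_mul hC.ne' (hpos n).ne'] at this
    simp only [g]
    linarith
  have hclimb (n : ℤ) : ∃ m : ℤ, |m| ≤ R ∧ g n + δ ≤ g (n + m) := by
    obtain ⟨m, hm, hexp⟩ := hexpand ((T ^ n) ω) (transfer T A n ω *ᵥ v)
    refine ⟨m, hm, ?_⟩
    have := Real.log_le_log (by have := hpos n; positivity) ((hcocycle n m).symm ▸ hexp)
    rw [Real.log_mul (by positivity) (hpos n).ne'] at this
    simp only [g]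
    linarith
  have hbound_of_log (k : ℕ) (n : ℤ) (h : δ / (R + 1) * k - (δ + c) ≤ g n) :
      Real.exp (-(δ + c)) * Real.exp (δ / (R + 1)) ^ k * ‖v‖ ≤ ‖transfer T A n ω *ᵥ v‖ := by
    have hv' := norm_pos_iff.mpr hv
    rw [← Real.exp_log (hpos n), ← Real.exp_log hv', ← Real.exp_nat_mul, ← Real.exp_add,
      ← Real.exp_add, Real.exp_le_exp]
    simp only [g] at h
    linarith
  exact (linear_growth_of_climb (Real.log_pos (by linarith)) (by simp [g]) hstep hclimb).imp
    (fun h k => hbound_of_log k _ (h k)) (fun h k => hbound_of_log k _ (h k))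

theorem exists_uniform_window_of_forall_exists_one_lt {X : Type*} [TopologicalSpace X]
    [CompactSpace X] {f : ℤ → X → ℝ} (hf : ∀ n, Continuous (f n)) (h : ∀ x, ∃ n, 1 < f n x) :
    ∃ R : ℕ, ∃ ε > 0, ∀ x, ∃ n, |n| ≤ (R : ℤ) ∧ 1 + ε ≤ f n x := by
  let U (N : ℕ) : Set X := ⋃ (n : ℤ) (_ : |n| ≤ (N : ℤ)), {x | 1 + 1 / ((N : ℝ) + 1) < f n x}
  have hU : Monotone U := by
    refine fun N M hNM x hx => ?_
    simp only [U, Set.mem_iUnion, Set.mem_ofPred_eq] at hx ⊢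
    obtain ⟨n, hn, hx⟩ := hx
    refine ⟨n, hn.trans (by exact_mod_cast hNM), lt_of_le_of_lt ?_ hx⟩
    gcongr
  have hcover : Set.univ ⊆ ⋃ N, U N := by
    intro x _
    obtain ⟨n, hn⟩ := h x
    obtain ⟨N, hN⟩ := exists_nat_one_div_lt (sub_pos.mpr hn)
    simp only [U, Set.mem_iUnion, Set.mem_ofPred_eq]
    refine ⟨max N n.natAbs, n, by rw [Int.abs_eq_natAbs]; exact_mod_cast le_max_right _ _, ?_⟩
    have : 1 / ((max N n.natAbs : ℕ) + 1 : ℝ) ≤ 1 / ((N : ℝ) + 1) := by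
      gcongr
      exact le_max_left _ _
    linarith
  obtain ⟨N, hN⟩ := isCompact_univ.elim_directed_cover U
    (fun N => isOpen_biUnion fun n _ => isOpen_lt continuous_const (hf n)) hcover hU.directed_le
  refine ⟨N, 1 / ((N : ℝ) + 1), by positivity, fun x => ?_⟩
  have hx := hN (Set.mem_univ x)
  simp only [U, Set.mem_iUnion, Set.mem_ofPred_eq] at hx
  obtain ⟨n, hn, hx⟩ := hx
  exact ⟨n, hn, hx.le⟩

theorem exists_forall_norm_le_of_finite {X ι' E : Type*} [TopologicalSpace X] [CompactSpace X]
    [Finite ι'] [SeminormedAddCommGroup E] {f : ι' → X → E} (hf : ∀ i, Continuous (f i)) :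
    ∃ C, ∀ i x, ‖f i x‖ ≤ C := by
  have := Fintype.ofFinite ι'
  obtain ⟨C, hC⟩ := isCompact_univ.exists_bound_of_continuousOn (continuous_pi hf).continuousOn
  exact ⟨C, fun i x => (norm_le_pi_norm (fun i => f i x) i).trans (hC x trivial)⟩

section CompactSpace

attribute [local instance] Matrix.linftyOpNormedAddCommGroup

variable [TopologicalSpace Ω] [CompactSpace Ω]

theorem uniformExpGrowth_of_uniform_expansion (T : Ω ≃ₜ Ω) {A : Ω → Matrix ι ι ℂ}
    (hA : Continuous A) (hdet : ∀ ω, IsUnit (A ω).det) {R : ℕ} {ε : ℝ} (hε : 0 < ε)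
    (hexpand : ∀ ω (v : ι → ℂ), ‖v‖ = 1 →
      ∃ r : ℤ, |r| ≤ (R : ℤ) ∧ 1 + ε ≤ ‖transfer T.toEquiv A r ω *ᵥ v‖) :
    UniformExpGrowth T.toEquiv A := by
  obtain ⟨C, hC⟩ := exists_forall_norm_le_of_finite (ι' := Finset.Icc (-(R : ℤ)) R)
    (f := fun r => transfer T.toEquiv A r) fun r => continuous_transfer T hA hdet r
  refine uniformExpGrowth_of_bounded_of_expanding hdet (R := R) (C := max C 1) (by positivity) hε
    (fun ω r w hr => ?_) (fun ω w => ?_)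
  · calc ‖transfer T.toEquiv A r ω *ᵥ w‖ ≤ ‖transfer T.toEquiv A r ω‖ * ‖w‖ :=
          Matrix.linfty_opNorm_mulVec _ _
      _ ≤ max C 1 * ‖w‖ := by
          gcongr
          exact (hC ⟨r, Finset.mem_Icc.mpr (abs_le.mp hr)⟩ ω).trans (le_max_left _ _)
  · rcases eq_or_ne w 0 with rfl | hw
    · exact ⟨0, by simp⟩
    obtain ⟨r, hr, h⟩ := hexpand ω _ (norm_smul_inv_norm (𝕜 := ℂ) hw)
    refine ⟨r, hr, ?_⟩
    rw [Matrix.mulVec_smul, norm_smul, norm_inv, RCLike.norm_ofReal, abs_norm] at h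
    rwa [le_inv_mul_iff₀ (norm_pos_iff.mpr hw), mul_comm] at h

end CompactSpace

/-- over a compact metric space with a homeomorphism `T` and continuous
`A : Ω → SL(2l, ℂ)`, if the cocycle `(T, A)` does not satisfy the uniform exponential
growth condition, then some orbit of a unit vector stays bounded by `1` for all `n : ℤ`. -/
theorem stmt4 {l : ℕ} [MetricSpace Ω] [CompactSpace Ω] (T : Ω ≃ₜ Ω)
    (A : Ω → Matrix (Fin (2 * l)) (Fin (2 * l)) ℂ) (hA : Continuous A)
    (hSL : ∀ ω, (A ω).det = 1)
    (hnUG : ¬ ∃ β : ℝ, 0 < β ∧ ∃ lam : ℝ, 1 < lam ∧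
      ∀ (ω : Ω) (v : Fin (2 * l) → ℂ), v ≠ 0 →
        (∀ n : ℕ, β * lam ^ n * ‖v‖ ≤ ‖(transfer T.toEquiv A (n : ℤ) ω).mulVec v‖) ∨
        (∀ n : ℕ, β * lam ^ n * ‖v‖ ≤ ‖(transfer T.toEquiv A (-(n : ℤ)) ω).mulVec v‖)) :
    ∃ (ω : Ω) (v : Fin (2 * l) → ℂ), ‖v‖ = 1 ∧
      ∀ n : ℤ, ‖(transfer T.toEquiv A n ω).mulVec v‖ ≤ 1 := by
  by_contra! hexpand
  have hdet (ω : Ω) : IsUnit (A ω).det := (hSL ω).symm ▸ isUnit_one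
  have : CompactSpace (Metric.sphere (0 : Fin (2 * l) → ℂ) 1) :=
    isCompact_iff_compactSpace.mp (isCompact_sphere 0 1)
  obtain ⟨R, ε, hε, hwindow⟩ := exists_uniform_window_of_forall_exists_one_lt
    (f := fun n (p : Ω × Metric.sphere (0 : Fin (2 * l) → ℂ) 1) =>
      ‖transfer T.toEquiv A n p.1 *ᵥ p.2‖)
    (fun n => (((continuous_transfer T hA hdet n).comp continuous_fst).matrix_mulVec
      (continuous_subtype_val.comp continuous_snd)).norm)
    (fun p => hexpand p.1 p.2 (by simp))
  exact hnUG (uniformExpGrowth_of_uniform_expansion T hA hdet hε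
    fun ω v hv => hwindow (ω, ⟨v, by simpa using hv⟩))
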